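/- Let h : ℝ → ℝ be twice differentiable and let L_{hh'} be a constant with √(h'(x₁)²h'(x₂)² + h(x₁)²h''(x₂)²) ≤ L_{hh'} for all (x₁,x₂) ∈ ℝ². Then for every u, θ ∈ ℝ^d and all W₁, W₂ ∈ ℝ^{d×d}, ‖( h'(W₁u)h(W₁u)^T − h'(W₂u)h(W₂u)^T )·θ‖₂ ≤ √(2d)·L_{hh'}·‖θ‖₂·‖u‖₂·‖W₁ − W₂‖_F, where h and h' are applied entrywise. -/

import Mathlib

/-!
Each entry of the matrix difference is `h'(p) h(q) - h'(p') h(q')`, and `L_{hh'}` bounds the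
gradient of `(x₁, x₂) ↦ h(x₁) h'(x₂)`; the mean value theorem along a segment therefore bounds
the `(i, j)` entry by `L_{hh'} √(δᵢ² + δⱼ²)` with `δ = (W₁ - W₂) u`. Summing these squares gives
Frobenius norm at most `√(2d) L_{hh'} ‖δ‖₂`, and `‖δ‖₂ ≤ ‖W₁ - W₂‖_F ‖u‖₂` by Cauchy–Schwarz.
-/

open Matrix

/-- Frobenius norm of a real matrix. -/
noncomputable def frobNorm {m n : ℕ} (A : Matrix (Fin m) (Fin n) ℝ) : ℝ :=
  Real.sqrt (∑ j, ∑ k, (A j k) ^ 2)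

/-- Euclidean norm of a vector in ℝ^n. -/
noncomputable def vecNorm {n : ℕ} (x : Fin n → ℝ) : ℝ :=
  Real.sqrt (∑ j, (x j) ^ 2)

theorem abs_mul_add_mul_le_sqrt_mul_sqrt (a b x y : ℝ) :
    |a * x + b * y| ≤ √(a ^ 2 + b ^ 2) * √(x ^ 2 + y ^ 2) := by
  rw [← Real.sqrt_mul (by positivity), ← Real.sqrt_sq_eq_abs]
  exact Real.sqrt_le_sqrt (by nlinarith [sq_nonneg (a * y - b * x)])

theorem abs_mul_sub_mul_le_of_sqrt_deriv_le {f g : ℝ → ℝ} (hf : Differentiable ℝ f)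
    (hg : Differentiable ℝ g) {L : ℝ}
    (hL : ∀ x₁ x₂, √((deriv f x₁ * g x₂) ^ 2 + (f x₁ * deriv g x₂) ^ 2) ≤ L)
    (x₁ x₂ y₁ y₂ : ℝ) :
    |f x₁ * g x₂ - f y₁ * g y₂| ≤ L * √((x₁ - y₁) ^ 2 + (x₂ - y₂) ^ 2) := by
  set γ₁ : ℝ → ℝ := fun t => y₁ + t * (x₁ - y₁)
  set γ₂ : ℝ → ℝ := fun t => y₂ + t * (x₂ - y₂)
  have hγ₁ (t : ℝ) : HasDerivAt γ₁ (x₁ - y₁) t :=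
    (((hasDerivAt_id' t).mul_const (x₁ - y₁)).const_add y₁).congr_deriv (one_mul _)
  have hγ₂ (t : ℝ) : HasDerivAt γ₂ (x₂ - y₂) t :=
    (((hasDerivAt_id' t).mul_const (x₂ - y₂)).const_add y₂).congr_deriv (one_mul _)
  have hφ (t : ℝ) : HasDerivAt (fun t => f (γ₁ t) * g (γ₂ t))
      (deriv f (γ₁ t) * (x₁ - y₁) * g (γ₂ t) + f (γ₁ t) * (deriv g (γ₂ t) * (x₂ - y₂))) t :=
    ((hf _).hasDerivAt.comp t (hγ₁ t)).mul ((hg _).hasDerivAt.comp t (hγ₂ t))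
  have hφ'_le (t : ℝ) :
      ‖deriv f (γ₁ t) * (x₁ - y₁) * g (γ₂ t) + f (γ₁ t) * (deriv g (γ₂ t) * (x₂ - y₂))‖ ≤
        L * √((x₁ - y₁) ^ 2 + (x₂ - y₂) ^ 2) := by
    rw [Real.norm_eq_abs, mul_right_comm, ← mul_assoc]
    exact (abs_mul_add_mul_le_sqrt_mul_sqrt _ _ _ _).trans
      (mul_le_mul_of_nonneg_right (hL _ _) (Real.sqrt_nonneg _))
  simpa [γ₁, γ₂] using norm_image_sub_le_of_norm_deriv_le_segment_01'
    (fun t _ => (hφ t).hasDerivWithinAt) (fun t _ => hφ'_le t)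

theorem vecNorm_nonneg {n : ℕ} (x : Fin n → ℝ) : 0 ≤ vecNorm x :=
  Real.sqrt_nonneg _

theorem vecNorm_mulVec_le {m n : ℕ} (A : Matrix (Fin m) (Fin n) ℝ) (u : Fin n → ℝ) :
    vecNorm (A *ᵥ u) ≤ frobNorm A * vecNorm u := by
  unfold vecNorm frobNorm
  rw [← Real.sqrt_mul (by positivity), Finset.sum_mul]
  exact Real.sqrt_le_sqrt
    (Finset.sum_le_sum fun i _ => Finset.sum_mul_sq_le_sq_mul_sq Finset.univ (A i) u)

theorem frobNorm_le_of_abs_le {d : ℕ} (M : Matrix (Fin d) (Fin d) ℝ) (δ : Fin d → ℝ) {L : ℝ}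
    (hL : 0 ≤ L) (hM : ∀ i j, |M i j| ≤ L * √(δ i ^ 2 + δ j ^ 2)) :
    frobNorm M ≤ √(2 * d) * L * vecNorm δ := by
  have hsq (i j : Fin d) : M i j ^ 2 ≤ L ^ 2 * (δ i ^ 2 + δ j ^ 2) := by
    have := pow_le_pow_left₀ (abs_nonneg _) (hM i j) 2
    rwa [sq_abs, mul_pow, Real.sq_sqrt (by positivity)] at this
  have hsum : ∑ i, ∑ j, L ^ 2 * (δ i ^ 2 + δ j ^ 2) = 2 * d * L ^ 2 * ∑ i, δ i ^ 2 := by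
    simp only [mul_add, Finset.sum_add_distrib, Finset.sum_const, ← Finset.mul_sum,
      Finset.card_univ, Fintype.card_fin, nsmul_eq_mul]
    ring
  unfold frobNorm vecNorm
  calc √(∑ i, ∑ j, M i j ^ 2) ≤ √(∑ i, ∑ j, L ^ 2 * (δ i ^ 2 + δ j ^ 2)) :=
        Real.sqrt_le_sqrt (Finset.sum_le_sum fun i _ => Finset.sum_le_sum fun j _ => hsq i j)
    _ = √(2 * d) * L * √(∑ i, δ i ^ 2) := by
        rw [hsum, Real.sqrt_mul' _ (by positivity), Real.sqrt_mul (by positivity),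
          Real.sqrt_sq hL]

theorem stmt14 {d : ℕ} (h : ℝ → ℝ) (hd1 : Differentiable ℝ h)
    (hd2 : Differentiable ℝ (deriv h)) (Lhh : ℝ)
    (hLhh : ∀ x₁ x₂ : ℝ,
      Real.sqrt ((deriv h x₁ * deriv h x₂) ^ 2 + (h x₁ * deriv (deriv h) x₂) ^ 2) ≤ Lhh)
    (u θ : Fin d → ℝ) (W₁ W₂ : Matrix (Fin d) (Fin d) ℝ) :
    vecNorm (fun i => ∑ j,
        (deriv h ((W₁ *ᵥ u) i) * h ((W₁ *ᵥ u) j) -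
          deriv h ((W₂ *ᵥ u) i) * h ((W₂ *ᵥ u) j)) * θ j) ≤
      Real.sqrt (2 * d) * Lhh * vecNorm θ * vecNorm u * frobNorm (W₁ - W₂) := by
  have hL : 0 ≤ Lhh := (Real.sqrt_nonneg _).trans (hLhh 0 0)
  set v₁ := W₁ *ᵥ u
  set v₂ := W₂ *ᵥ u
  set M : Matrix (Fin d) (Fin d) ℝ :=
    of fun i j => deriv h (v₁ i) * h (v₁ j) - deriv h (v₂ i) * h (v₂ j)
  have hM (i j : Fin d) :
      |M i j| ≤ Lhh * √(((W₁ - W₂) *ᵥ u) i ^ 2 + ((W₁ - W₂) *ᵥ u) j ^ 2) := by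
    rw [sub_mulVec, Pi.sub_apply, Pi.sub_apply, add_comm]
    simp only [M, of_apply, mul_comm (deriv h _)]
    exact abs_mul_sub_mul_le_of_sqrt_deriv_le hd1 hd2 hLhh _ _ _ _
  calc vecNorm (M *ᵥ θ) ≤ frobNorm M * vecNorm θ := vecNorm_mulVec_le M θ
    _ ≤ √(2 * d) * Lhh * vecNorm ((W₁ - W₂) *ᵥ u) * vecNorm θ :=
        mul_le_mul_of_nonneg_right (frobNorm_le_of_abs_le M _ hL hM) (vecNorm_nonneg θ)
    _ ≤ √(2 * d) * Lhh * (frobNorm (W₁ - W₂) * vecNorm u) * vecNorm θ := by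
        gcongr
        · exact vecNorm_nonneg θ
        · exact vecNorm_mulVec_le _ _
    _ = _ := by ring
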